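/- For every τ > 0 and c > 0, with λ = c(c − √(c²+4))/2 and ν = c(c + √(c²+4))/2, the following strict inequality holds: (e c² τ² / (2 + √(c⁴τ² + 4c²τ² + 4))) · exp((√(c⁴τ² + 4c²τ² + 4) − c²τ)/2) > 1 − (ν − λ)/(ν e^{−λτ} − λ e^{−ντ}). -/

import Mathlib

/-!
Put `a = -λτ > 0` and `b = ντ > 0`; then `ab = c²τ²`, `b - a = c²τ` and
`c⁴τ² + 4c²τ² + 4 = (a + b)² + 4 =: s²`, and the left side is `1 - (a + b)/D` with
`D = b eᵃ + a e⁻ᵇ ≥ a + b`. The first- and second-order Taylor bounds for `eᵃ` and `e⁻ᵇ` give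
`D - (a + b) ≤ ab eᵃ` and `D - (a + b) ≤ ab eᵃ (a + b)/2`, which together bound the left side by
`2ab eᵃ/(2 + a + b)`. The right side is `e ab e^{(a-b)/2} · e^{s/2}/(2 + s)`, and `t ↦ e^{t/2}/(2 + t)`
increases on `t ≥ 0`, so evaluating at `t = a + b ≤ s` bounds it below by `e ab eᵃ/(2 + a + b)`;
`e > 2` makes the inequality strict.
-/

open Real Set

/-- `λ = c(c - √(c²+4))/2`. -/
noncomputable def lam (c : ℝ) : ℝ := c * (c - Real.sqrt (c^2 + 4)) / 2

/-- `ν = c(c + √(c²+4))/2`. -/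
noncomputable def nu (c : ℝ) : ℝ := c * (c + Real.sqrt (c^2 + 4)) / 2

theorem exp_neg_le_one_sub_add_sq_div_two {x : ℝ} (hx : 0 ≤ x) :
    exp (-x) ≤ 1 - x + x ^ 2 / 2 := by
  have hq := quadratic_le_exp_of_nonneg hx
  rw [exp_neg, inv_le_iff_one_le_mul₀ (by positivity)]
  -- `(1 - x + x²/2)(1 + x + x²/2) = 1 + x⁴/4`
  nlinarith [mul_le_mul_of_nonneg_left hq (by nlinarith : (0:ℝ) ≤ 1 - x + x ^ 2 / 2),
    pow_nonneg hx 4]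

theorem exp_sub_one_le_mul_exp (x : ℝ) : exp x - 1 ≤ x * exp x := by
  have h := mul_le_mul_of_nonneg_right (add_one_le_exp (-x)) (exp_pos x).le
  rw [← exp_add, neg_add_cancel, exp_zero] at h
  linarith

theorem exp_sub_one_sub_le_sq_div_two_mul_exp {x : ℝ} (hx : 0 ≤ x) :
    exp x - 1 - x ≤ x ^ 2 / 2 * exp x := by
  -- `t ↦ (1 + t) e⁻ᵗ + t²/2` has derivative `t (1 - e⁻ᵗ) ≥ 0`
  have hmono : MonotoneOn (fun t => (1 + t) * exp (-t) + t ^ 2 / 2) (Ici 0) := by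
    refine monotoneOn_of_hasDerivWithinAt_nonneg (f' := fun t => t * (1 - exp (-t)))
      (convex_Ici 0) (by fun_prop) (fun t _ => ?_) (fun t ht => ?_)
    · refine ((((hasDerivAt_id t).const_add 1).mul (hasDerivAt_neg t).exp).add
        ((hasDerivAt_pow 2 t).div_const 2)).hasDerivWithinAt.congr_deriv ?_
      simp only [id, Nat.cast_ofNat]
      ring
    · rw [interior_Ici] at ht
      have : exp (-t) ≤ 1 := exp_le_one_iff.mpr (neg_nonpos.mpr (le_of_lt ht))
      exact mul_nonneg (le_of_lt ht) (by linarith)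
  have h : 1 ≤ (1 + x) * exp (-x) + x ^ 2 / 2 := by simpa using hmono self_mem_Ici hx hx
  have hinv : exp (-x) * exp x = 1 := by rw [← exp_add, neg_add_cancel, exp_zero]
  nlinarith [mul_le_mul_of_nonneg_right h (exp_pos x).le]

theorem monotoneOn_exp_half_div_two_add :
    MonotoneOn (fun t => exp (t / 2) / (2 + t)) (Ici 0) := by
  intro t (ht : 0 ≤ t) s _ hts
  show exp (t / 2) / (2 + t) ≤ exp (s / 2) / (2 + s)
  rw [div_le_div_iff₀ (by linarith) (by linarith)]
  have hsplit : exp (s / 2) = exp (t / 2) * exp ((s - t) / 2) := by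
    rw [← exp_add]; ring_nf
  -- `e^{(s-t)/2} ≥ 1 + (s-t)/2` and `(2 + t)/2 ≥ 1`
  have h1 := add_one_le_exp ((s - t) / 2)
  rw [hsplit]
  nlinarith [mul_le_mul_of_nonneg_left h1
      (mul_nonneg (exp_pos (t / 2)).le (by linarith : (0:ℝ) ≤ 2 + t)),
    mul_nonneg (mul_nonneg (exp_pos (t / 2)).le ht) (by linarith : (0:ℝ) ≤ s - t)]

section

variable {a b : ℝ}

theorem add_le_mul_exp_add_mul_exp_neg (ha : 0 ≤ a) (hb : 0 ≤ b) :
    a + b ≤ b * exp a + a * exp (-b) := by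
  nlinarith [mul_le_mul_of_nonneg_left (add_one_le_exp a) hb,
    mul_le_mul_of_nonneg_left (add_one_le_exp (-b)) ha]

theorem mul_exp_add_mul_exp_neg_sub_le (ha : 0 ≤ a) (hb : 0 ≤ b) :
    (b * exp a + a * exp (-b) - (a + b)) * (2 + (a + b)) ≤ 2 * (a * b * exp a) * (a + b) := by
  have h₁ : b * exp a + a * exp (-b) - (a + b) ≤ a * b * exp a := by
    nlinarith [mul_le_mul_of_nonneg_left (exp_le_one_iff.mpr (neg_nonpos.mpr hb)) ha,
      mul_le_mul_of_nonneg_left (exp_sub_one_le_mul_exp a) hb]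
  have h₂ : b * exp a + a * exp (-b) - (a + b) ≤ a * b * exp a * (a + b) / 2 := by
    nlinarith [mul_le_mul_of_nonneg_left (exp_sub_one_sub_le_sq_div_two_mul_exp ha) hb,
      mul_le_mul_of_nonneg_left (exp_neg_le_one_sub_add_sq_div_two hb) ha,
      mul_le_mul_of_nonneg_left (one_le_exp ha) (mul_nonneg (mul_nonneg ha hb) hb)]
  -- split the factor `2 + (a + b)`: the `2`-part is bounded by `h₂`, the `(a + b)`-part by `h₁`
  nlinarith [mul_le_mul_of_nonneg_left h₁ (add_nonneg ha hb)]

theorem one_sub_div_mul_exp_add_mul_exp_neg_le (ha : 0 < a) (hb : 0 < b) :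
    1 - (a + b) / (b * exp a + a * exp (-b)) ≤ 2 * (a * b * exp a) / (2 + (a + b)) := by
  have hD := add_le_mul_exp_add_mul_exp_neg ha.le hb.le
  have hx : 0 < a + b := add_pos ha hb
  rw [one_sub_div (by linarith), div_le_div_iff₀ (by linarith) (by linarith)]
  nlinarith [mul_exp_add_mul_exp_neg_sub_le ha.le hb.le,
    mul_le_mul_of_nonneg_left hD (by positivity : (0:ℝ) ≤ 2 * (a * b * exp a))]

theorem one_sub_div_mul_exp_add_mul_exp_neg_lt (ha : 0 < a) (hb : 0 < b) :
    1 - (a + b) / (b * exp a + a * exp (-b)) <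
      exp 1 * (a * b) / (2 + √((a + b) ^ 2 + 4)) * exp ((√((a + b) ^ 2 + 4) - (b - a)) / 2) := by
  set s := √((a + b) ^ 2 + 4)
  have hs : a + b ≤ s := le_sqrt_of_sq_le (by linarith)
  have hmono := monotoneOn_exp_half_div_two_add (add_pos ha hb).le
    ((add_pos ha hb).le.trans hs) hs
  have hsplit : exp ((s - (b - a)) / 2) = exp (s / 2) * exp ((a - b) / 2) := by
    rw [← exp_add]; ring_nf
  have hexp : exp a = exp ((a + b) / 2) * exp ((a - b) / 2) := by
    rw [← exp_add]; ring_nf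
  calc 1 - (a + b) / (b * exp a + a * exp (-b))
      ≤ 2 * (a * b * exp a) / (2 + (a + b)) := one_sub_div_mul_exp_add_mul_exp_neg_le ha hb
    _ < exp 1 * (a * b * exp a) / (2 + (a + b)) := by
        gcongr
        linarith [add_one_lt_exp one_ne_zero]
    _ = exp 1 * (a * b) * exp ((a - b) / 2) * (exp ((a + b) / 2) / (2 + (a + b))) := by
        rw [hexp]; ring
    _ ≤ exp 1 * (a * b) * exp ((a - b) / 2) * (exp (s / 2) / (2 + s)) := by
        gcongr
    _ = _ := by rw [hsplit]; ring

end

theorem lam_neg {c : ℝ} (hc : 0 < c) : lam c < 0 := by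
  have : c < √(c ^ 2 + 4) := lt_sqrt_of_sq_lt (by linarith)
  unfold lam
  nlinarith

theorem nu_pos {c : ℝ} (hc : 0 < c) : 0 < nu c := by
  unfold nu
  positivity

theorem lam_add_nu (c : ℝ) : lam c + nu c = c ^ 2 := by
  unfold lam nu
  ring

theorem lam_mul_nu (c : ℝ) : lam c * nu c = -c ^ 2 := by
  have := sq_sqrt (by positivity : (0:ℝ) ≤ c ^ 2 + 4)
  unfold lam nu
  linear_combination (-c ^ 2 / 4) * this

/-- the strict inequality of Lemma `CK`:
`(e c²τ²/(2 + √(c⁴τ² + 4c²τ² + 4))) exp((√(c⁴τ² + 4c²τ² + 4) - c²τ)/2)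
  > 1 - (ν - λ)/(ν e^{-λτ} - λ e^{-ντ})` for all `τ, c > 0`. -/
theorem stmt_14 (τ c : ℝ) (hτ : 0 < τ) (hc : 0 < c) :
    1 - (nu c - lam c) /
        (nu c * Real.exp (-(lam c) * τ) - lam c * Real.exp (-(nu c) * τ)) <
      Real.exp 1 * c^2 * τ^2 / (2 + Real.sqrt (c^4*τ^2 + 4*c^2*τ^2 + 4)) *
        Real.exp ((Real.sqrt (c^4*τ^2 + 4*c^2*τ^2 + 4) - c^2*τ) / 2) := by
  set a := -lam c * τ with ha
  set b := nu c * τ with hb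
  have hab : a * b = c ^ 2 * τ ^ 2 := by
    rw [ha, hb]; linear_combination (-τ ^ 2) * lam_mul_nu c
  have hba : b - a = c ^ 2 * τ := by
    rw [ha, hb]; linear_combination τ * lam_add_nu c
  have hdisc : c ^ 4 * τ ^ 2 + 4 * c ^ 2 * τ ^ 2 + 4 = (a + b) ^ 2 + 4 := by
    linear_combination (-(b - a + c ^ 2 * τ)) * hba - 4 * hab
  have hfrac : (nu c - lam c) / (nu c * exp a - lam c * exp (-b)) =
      (a + b) / (b * exp a + a * exp (-b)) := by
    rw [← mul_div_mul_right _ _ hτ.ne']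
    congr 1 <;> ring
  rw [show -nu c * τ = -b by ring, hfrac, hdisc, ← hba,
    show exp 1 * c ^ 2 * τ ^ 2 = exp 1 * (a * b) by rw [hab]; ring]
  exact one_sub_div_mul_exp_add_mul_exp_neg_lt (mul_pos (neg_pos.mpr (lam_neg hc)) hτ)
    (mul_pos (nu_pos hc) hτ)
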